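/- Let A be a unital C*-algebra and let (φ_t)_{t≥0} be a family of completely positive subunital maps on A with φ_0 = id, and suppose there exists a bounded linear map R with ‖R − (φ_t − id)/t‖ → 0 as t → 0⁺. Then R has the dissipation property: R(x*x) − R(x*)x − x*R(x) ≥ 0 for all x ∈ A. -/
import Mathlib

open Matrix

/-- Complete positivity of a continuous linear endomorphism of a C*-algebra. -/
def IsCompletelyPositive {A : Type*} [NormedRing A] [StarRing A]
    [NormedAlgebra ℂ A] (Φ : A →L[ℂ] A) : Prop :=
  ∀ (n : ℕ) (X : Matrix (Fin n) (Fin n) A),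
    (∃ B : Matrix (Fin n) (Fin n) A, X = Bᴴ * B) →
    ∃ C : Matrix (Fin n) (Fin n) A, X.map Φ = Cᴴ * C

lemma quadform_nonneg_aux {A : Type*} [NormedRing A] [StarRing A] [CStarRing A]
    [CompleteSpace A] [NormedAlgebra ℂ A] [StarModule ℂ A] [PartialOrder A]
    [StarOrderedRing A] (M : Matrix (Fin 2) (Fin 2) A)
    (hM : ∃ C : Matrix (Fin 2) (Fin 2) A, M = Cᴴ * C) (v : Fin 2 → A) :
    0 ≤ star (v 0) * M 0 0 * v 0 + star (v 0) * M 0 1 * v 1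
      + star (v 1) * M 1 0 * v 0 + star (v 1) * M 1 1 * v 1 := by
  obtain ⟨C, rfl⟩ := hM
  have h : star (v 0) * (Cᴴ*C) 0 0 * v 0 + star (v 0) * (Cᴴ*C) 0 1 * v 1
      + star (v 1) * (Cᴴ*C) 1 0 * v 0 + star (v 1) * (Cᴴ*C) 1 1 * v 1
      = star (C.mulVec v 0) * (C.mulVec v 0) + star (C.mulVec v 1) * (C.mulVec v 1) := by
    simp [Matrix.mul_apply, Matrix.conjTranspose_apply, Matrix.mulVec, dotProduct,
      Fin.sum_univ_two, mul_add, add_mul, star_add, StarMul.star_mul, mul_assoc]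
    abel
  rw [h]
  exact add_nonneg (star_mul_self_nonneg _) (star_mul_self_nonneg _)

/-- If `(φ_t)` is a family of completely positive subunital maps with
`φ_0 = id` whose right derivative at `t = 0` is `R` (in operator norm), then
`R` has the dissipation property. -/
theorem derivative_of_cp_subunital_family_is_dissipative
    {A : Type*} [NormedRing A] [StarRing A] [CStarRing A] [CompleteSpace A]
    [NormedAlgebra ℂ A] [StarModule ℂ A] [PartialOrder A] [StarOrderedRing A]
    (φ : ℝ → (A →L[ℂ] A))
    (hCP : ∀ t : ℝ, 0 ≤ t → IsCompletelyPositive (φ t))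
    (hsub : ∀ t : ℝ, 0 ≤ t → φ t 1 ≤ 1)
    (h0 : φ 0 = 1)
    (R : A →L[ℂ] A)
    (hlim : Filter.Tendsto (fun t : ℝ => ‖R - (1 / t) • (φ t - 1)‖)
      (nhdsWithin 0 (Set.Ioi 0)) (nhds 0)) :
    ∀ x : A, 0 ≤ R (star x * x) - R (star x) * x - star x * R x := by
  letI : CStarAlgebra A := { }
  intro x
  -- positivity of P t := φ t (x*x) - φ t (x*) x - x* φ t x + x*x for t ≥ 0
  have hP : ∀ t : ℝ, 0 ≤ t →
      0 ≤ φ t (star x * x) - φ t (star x) * x - star x * φ t x + star x * x := by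
    intro t ht
    set B : Matrix (Fin 2) (Fin 2) A := !![x, 1; 0, 0] with hB
    obtain ⟨C, hC⟩ := hCP t ht 2 (Bᴴ * B) ⟨B, rfl⟩
    have hquad := quadform_nonneg_aux ((Bᴴ * B).map (φ t)) ⟨C, hC⟩ ![(1 : A), -x]
    have hQ : 0 ≤ φ t (star x * x) - φ t (star x) * x - star x * φ t x
        + star x * φ t 1 * x := by
      have e00 : ((Bᴴ * B).map (φ t)) 0 0 = φ t (star x * x) := by
        simp [hB, Matrix.mul_apply, Fin.sum_univ_two, Matrix.conjTranspose_apply]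
      have e01 : ((Bᴴ * B).map (φ t)) 0 1 = φ t (star x) := by
        simp [hB, Matrix.mul_apply, Fin.sum_univ_two, Matrix.conjTranspose_apply]
      have e10 : ((Bᴴ * B).map (φ t)) 1 0 = φ t x := by
        simp [hB, Matrix.mul_apply, Fin.sum_univ_two, Matrix.conjTranspose_apply]
      have e11 : ((Bᴴ * B).map (φ t)) 1 1 = φ t 1 := by
        simp [hB, Matrix.mul_apply, Fin.sum_univ_two, Matrix.conjTranspose_apply]
      rw [e00, e01, e10, e11] at hquad
      simp only [Matrix.cons_val_zero, Matrix.cons_val_one, Matrix.head_cons, star_one,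
        one_mul, mul_one, star_neg, neg_mul, mul_neg, neg_neg] at hquad
      convert hquad using 1
      noncomm_ring
    have h1 : star x * φ t 1 * x ≤ star x * 1 * x :=
      star_left_conjugate_le_conjugate (hsub t ht) x
    have h2 : 0 ≤ star x * x - star x * φ t 1 * x := by
      rw [mul_one] at h1
      exact sub_nonneg.mpr h1
    have := add_nonneg hQ h2
    convert this using 1
    noncomm_ring
  -- limits
  have hΨ : Filter.Tendsto (fun t : ℝ => (1 / t) • (φ t - 1))
      (nhdsWithin 0 (Set.Ioi 0)) (nhds R) := by
    rw [tendsto_iff_norm_sub_tendsto_zero]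
    simpa [norm_sub_rev] using hlim
  have hcont : Continuous (fun T : A →L[ℂ] A =>
      T (star x * x) - T (star x) * x - star x * T x) := by
    have h1 := (ContinuousLinearMap.apply ℂ A (star x * x)).continuous
    have h2 := (ContinuousLinearMap.apply ℂ A (star x)).continuous
    have h3 := (ContinuousLinearMap.apply ℂ A x).continuous
    exact (h1.sub (h2.mul continuous_const)).sub (continuous_const.mul h3)
  have htend := (hcont.tendsto R).comp hΨ
  refine (CStarAlgebra.isClosed_nonneg (A := A)).mem_of_tendsto htend ?_
  filter_upwards [self_mem_nhdsWithin] with t ht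
  have htpos : (0 : ℝ) < t := ht
  show 0 ≤ ((1 / t) • (φ t - 1)) (star x * x) - ((1 / t) • (φ t - 1)) (star x) * x
      - star x * ((1 / t) • (φ t - 1)) x
  have expand : ((1 / t) • (φ t - 1)) (star x * x) - ((1 / t) • (φ t - 1)) (star x) * x
      - star x * ((1 / t) • (φ t - 1)) x
      = (1 / t) • (φ t (star x * x) - φ t (star x) * x - star x * φ t x + star x * x) := by
    simp only [ContinuousLinearMap.smul_apply, ContinuousLinearMap.sub_apply,
      ContinuousLinearMap.one_apply, smul_mul_assoc, mul_smul_comm, ← smul_sub]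
    congr 1
    noncomm_ring
  rw [expand]
  exact smul_nonneg (by positivity) (hP t htpos.le)
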